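/- arXiv:2008.09051 — 6 statements merged into one kernel-verified Lean document; each statement's English description precedes it below -/
import Mathlib

section
/- Let n, k be integers with n > 2k and k ≥ 1, and let i be an integer with 0 ≤ i < k. Then the Kronecker cover K_2 × G_i(n,k) is isomorphic to the bipartite Kneser graph H(n,k) = K_2 × K(n,k). -/
/-- The involution on `ℕ` swapping `2j ↔ 2j+1` for `j < i`. -/
def sigmaNat (i : ℕ) (x : ℕ) : ℕ :=
  if x < 2 * i then (if x % 2 = 0 then x + 1 else x - 1) else x

lemma sigmaNat_invol (i : ℕ) : Function.Involutive (sigmaNat i) := by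
  intro x; unfold sigmaNat; split_ifs <;> omega

/-- `sigmaNat` restricted to `Fin n` (the identity in the out-of-range degenerate case,
which never occurs when `2 * i ≤ n`). -/
def sigmaFinFun (n i : ℕ) (x : Fin n) : Fin n :=
  if h : sigmaNat i x.val < n then ⟨sigmaNat i x.val, h⟩ else x

lemma sigmaFinFun_invol (n i : ℕ) : Function.Involutive (sigmaFinFun n i) := by
  intro x
  unfold sigmaFinFun
  by_cases h : sigmaNat i x.val < n
  · rw [dif_pos h]
    have h2 : sigmaNat i ((⟨sigmaNat i x.val, h⟩ : Fin n) : ℕ) < n := by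
      show sigmaNat i (sigmaNat i x.val) < n
      rw [sigmaNat_invol]; exact x.isLt
    rw [dif_pos h2]
    ext
    exact sigmaNat_invol i x.val
  · rw [dif_neg h, dif_neg h]

/-- The permutation `σ_i = (1 2)(3 4)⋯(2i-1 2i)` of `[n]`, in `0`-indexed form on `Fin n`:
it swaps `2j ↔ 2j+1` for `j < i` and fixes everything else (assuming `2 * i ≤ n`). -/
def sigmaPerm (n i : ℕ) : Equiv.Perm (Fin n) :=
  Function.Involutive.toPerm _ (sigmaFinFun_invol n i)

/-- The Kneser graph `K(n,k)`: vertices are the `k`-subsets of `[n]`, two subsets being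
adjacent iff they are disjoint. -/
def kneserGraph (n k : ℕ) : SimpleGraph {s : Finset (Fin n) // s.card = k} where
  Adj v w := v ≠ w ∧ Disjoint v.1 w.1
  symm := ⟨fun _ _ h => ⟨h.1.symm, h.2.symm⟩⟩
  loopless := ⟨fun _ h => h.1 rfl⟩

/-- The graph `G_i(n,k)`: vertices are the `k`-subsets of `[n]`, with `v` adjacent to `w`
iff `v ∩ σ_i(w) = ∅`. -/
def GGraph (n k i : ℕ) : SimpleGraph {s : Finset (Fin n) // s.card = k} where
  Adj v w := v ≠ w ∧ Disjoint v.1 (w.1.image (sigmaPerm n i))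
  symm := by
    refine ⟨?_⟩
    rintro v w ⟨h1, h2⟩
    refine ⟨h1.symm, ?_⟩
    rw [Finset.disjoint_left] at h2 ⊢
    intro a haw hav
    rcases Finset.mem_image.mp hav with ⟨b, hbv, hba⟩
    refine h2 hbv (Finset.mem_image.mpr ⟨a, haw, ?_⟩)
    rw [← hba]
    exact (sigmaFinFun_invol n i) b
  loopless := ⟨fun _ h => h.1 rfl⟩

/-- The Kronecker cover `K₂ × G`: vertex set `{0,1} × V(G)`, with `(a,v)` adjacent to
`(b,w)` iff `a ≠ b` and `v` is adjacent to `w` in `G`. -/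
def kroneckerCover {V : Type*} (G : SimpleGraph V) : SimpleGraph (Fin 2 × V) where
  Adj x y := x.1 ≠ y.1 ∧ G.Adj x.2 y.2
  symm := ⟨fun _ _ h => ⟨h.1.symm, h.2.symm⟩⟩
  loopless := ⟨fun _ h => h.1 rfl⟩

/-
Twist the second layer of the cover by `σ_i`: `(0, v) ↦ (0, v)`, `(1, w) ↦ (1, σ_i(w))`. Adjacency
of `v, w` in `G_i(n,k)` and of `v, σ_i(w)` in `K(n,k)` both say that `v` and `σ_i(w)` are disjoint;
the side conditions `v ≠ w` and `v ≠ σ_i(w)` are automatic for disjoint pairs, since a nonempty set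
is not disjoint from itself, and a `k`-set `s` is not disjoint from `σ_i(s)`: otherwise `s ∪ σ_i(s)`
would be `2k` points moved by `σ_i`, which moves only `2i < 2k` points.
-/

open Finset

def kroneckerCoverCongr {V W : Type*} {G : SimpleGraph V} {H : SimpleGraph W} (ψ φ : V ≃ W)
    (h : ∀ v w, G.Adj v w ↔ H.Adj (ψ v) (φ w)) :
    kroneckerCover G ≃g kroneckerCover H where
  toEquiv := (Equiv.refl (Fin 2)).prodShear ![ψ, φ]
  map_rel_iff' := by
    rintro ⟨a, v⟩ ⟨b, w⟩
    fin_cases a <;> fin_cases b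
    · simp [kroneckerCover]
    · simpa [kroneckerCover] using (h v w).symm
    · simpa [kroneckerCover, G.adj_comm v, H.adj_comm (φ v)] using (h w v).symm
    · simp [kroneckerCover]

theorem Equiv.Perm.two_mul_card_le_card_support_of_disjoint_image {α : Type*} [Fintype α]
    [DecidableEq α] {σ : Equiv.Perm α} {s : Finset α} (h : _root_.Disjoint s (s.image σ)) :
    2 * #s ≤ #σ.support := by
  have hs : s ⊆ σ.support := fun x hx => Equiv.Perm.mem_support.mpr fun hfix =>
    disjoint_left.mp h hx (mem_image.mpr ⟨x, hx, hfix⟩)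
  have hσs : s.image σ ⊆ σ.support := by
    simpa [image_subset_iff] using fun x hx => Equiv.Perm.apply_mem_support.mpr (hs hx)
  calc 2 * #s = #(s ∪ s.image σ) := by
        rw [card_union_of_disjoint h, card_image_of_injective _ σ.injective, two_mul]
    _ ≤ #σ.support := card_le_card (union_subset hs hσs)

theorem sigmaPerm_apply_of_le {n i : ℕ} {x : Fin n} (hx : 2 * i ≤ x) : sigmaPerm n i x = x := by
  have hfix : sigmaNat i x = x := if_neg (by omega)
  ext
  simp [sigmaPerm, sigmaFinFun, hfix]

theorem card_support_sigmaPerm_le (n i : ℕ) : #(sigmaPerm n i).support ≤ 2 * i :=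
  calc #(sigmaPerm n i).support ≤ #{x : Fin n | (x : ℕ) < 2 * i} := by
        refine card_le_card fun x hx => mem_filter.mpr ⟨mem_univ x, ?_⟩
        by_contra! hle
        exact Equiv.Perm.mem_support.mp hx (sigmaPerm_apply_of_le hle)
    _ ≤ 2 * i := Fin.card_filter_val_lt.trans_le (min_le_right _ _)

theorem not_disjoint_image_sigmaPerm {n i : ℕ} {s : Finset (Fin n)} (hi : i < #s) :
    ¬Disjoint s (s.image (sigmaPerm n i)) := fun h => by
  have := (Equiv.Perm.two_mul_card_le_card_support_of_disjoint_image h).trans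
    (card_support_sigmaPerm_le n i)
  omega

def Equiv.finsetCardCongr {α β : Type*} (e : α ≃ β) (k : ℕ) :
    {s : Finset α // #s = k} ≃ {s : Finset β // #s = k} :=
  e.finsetCongr.subtypeEquiv fun s => by simp

theorem GGraph_adj_iff_kneserGraph_adj {n k i : ℕ} (hi : i < k)
    (v w : {s : Finset (Fin n) // #s = k}) :
    (GGraph n k i).Adj v w ↔ (kneserGraph n k).Adj v ((sigmaPerm n i).finsetCardCongr k w) := by
  have hσw : ((sigmaPerm n i).finsetCardCongr k w).1 = w.1.image (sigmaPerm n i) := by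
    simp [Equiv.finsetCardCongr, map_eq_image]
  simp only [GGraph, kneserGraph, hσw]
  refine and_congr_left fun hdisj => not_congr ⟨?_, ?_⟩ <;> rintro rfl
  · exact absurd hdisj (not_disjoint_image_sigmaPerm (hi.trans_eq v.2.symm))
  · rw [← hσw, disjoint_self, bot_eq_empty] at hdisj
    have hk := ((sigmaPerm n i).finsetCardCongr k w).2
    rw [hdisj, card_empty] at hk
    omega

theorem kroneckerCover_GGraph_iso_bipartiteKneser_general (n k i : ℕ) (hi : i < k) :
    Nonempty (kroneckerCover (GGraph n k i) ≃g kroneckerCover (kneserGraph n k)) :=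
  ⟨kroneckerCoverCongr (Equiv.refl _) _ (GGraph_adj_iff_kneserGraph_adj hi)⟩

/-- for `n > 2k`, `k ≥ 1` and `0 ≤ i < k`, the Kronecker cover
`K₂ × G_i(n,k)` is isomorphic to the bipartite Kneser graph `H(n,k) = K₂ × K(n,k)`. -/
theorem kroneckerCover_GGraph_iso_bipartiteKneser (n k i : ℕ)
    (hn : 2 * k < n) (hk : 1 ≤ k) (hi : i < k) :
    Nonempty (kroneckerCover (GGraph n k i) ≃g kroneckerCover (kneserGraph n k)) :=
  kroneckerCover_GGraph_iso_bipartiteKneser_general n k i hi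
end

section
/- Let X and Y be bigraphs with 2-colorings ε_X, ε_Y, and let α and β be odd involutions of X and Y respectively such that no vertex x of X is adjacent to α(x) and no vertex y of Y is adjacent to β(y). For every graph homomorphism f : X/α → Y/β there is a unique even graph homomorphism f̃ : X → Y (i.e. ε_Y ∘ f̃ = ε_X) such that π_Y ∘ f̃ = f ∘ π_X. Moreover, if f is an isomorphism, then f̃ is an isomorphism. -/
/-!
An orbit `{y, β y}` of an odd involution contains exactly one vertex of each colour, so a map
of orbits `f` together with the requirement that colours be preserved determines the lift `g`
pointwise. It is a graph homomorphism because the edges of `Y` between two adjacent orbits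
are `u v` and `β u β v`, and of these only one joins the prescribed colours in the prescribed order.
For an isomorphism `f`, the lifts of `f` and `f⁻¹` compose to even lifts of the identity,
which are the identity by uniqueness.
-/

/-- The setoid on vertices whose classes are the orbits `{x, α x}` of an involution `α`. -/
def orbitSetoid {V : Type*} (α : Equiv.Perm V) (hinv : ∀ x, α (α x) = x) : Setoid V where
  r x y := y = x ∨ y = α x
  iseqv := by
    refine ⟨fun x => Or.inl rfl, ?_, ?_⟩
    · rintro x y (rfl | rfl)
      · exact Or.inl rfl
      · exact Or.inr (hinv x).symm
    · rintro x y z (rfl | rfl) (rfl | rfl)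
      · exact Or.inl rfl
      · exact Or.inr rfl
      · exact Or.inr rfl
      · exact Or.inl (hinv x)

/-- The quotient graph `X/α` of a graph `X` by an involution `α` such that no vertex is
adjacent to its image: vertices are the orbits `{x, α x}`, two orbits being adjacent iff
some element of one is adjacent in `X` to some element of the other. -/
def quotGraph {V : Type*} (X : SimpleGraph V) (α : Equiv.Perm V)
    (hinv : ∀ x, α (α x) = x) (hns : ∀ x, ¬ X.Adj x (α x)) :
    SimpleGraph (Quotient (orbitSetoid α hinv)) where
  Adj a b := ∃ x y, Quotient.mk (orbitSetoid α hinv) x = a ∧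
    Quotient.mk (orbitSetoid α hinv) y = b ∧ X.Adj x y
  symm := by constructor; rintro a b ⟨x, y, hx, hy, h⟩; exact ⟨y, x, hy, hx, h.symm⟩
  loopless := by
    constructor
    rintro a ⟨x, y, hx, hy, h⟩
    rw [← hx] at hy
    rcases Quotient.exact hy with (h2 | h2)
    · subst h2; exact X.loopless.irrefl _ h
    · subst h2; exact hns y (X.symm.symm _ _ h)

lemma fin_two_eq_of_ne_of_ne : ∀ {a b c : Fin 2}, a ≠ b → c ≠ b → a = c := by decide

namespace orbitSetoid

variable {W : Type*} {β : Equiv.Perm W} {hinv : ∀ y, β (β y) = y} {ε : W → Fin 2}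

lemma mk_apply (y : W) :
    Quotient.mk (orbitSetoid β hinv) (β y) = Quotient.mk (orbitSetoid β hinv) y :=
  (Quotient.sound (Or.inr rfl)).symm

lemma eq_of_mk_eq_of_color_eq (hodd : ∀ y, ε (β y) ≠ ε y) {u v : W}
    (h : Quotient.mk (orbitSetoid β hinv) u = Quotient.mk (orbitSetoid β hinv) v)
    (hc : ε u = ε v) : u = v := by
  rcases Quotient.exact h with rfl | rfl
  · rfl
  · exact absurd hc.symm (hodd u)

lemma exists_mk_eq_color_eq (hodd : ∀ y, ε (β y) ≠ ε y)
    (q : Quotient (orbitSetoid β hinv)) (c : Fin 2) :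
    ∃ w, Quotient.mk (orbitSetoid β hinv) w = q ∧ ε w = c := by
  by_cases hc : ε q.out = c
  · exact ⟨q.out, q.out_eq, hc⟩
  · exact ⟨β q.out, (mk_apply _).trans q.out_eq, fin_two_eq_of_ne_of_ne (hodd _) (Ne.symm hc)⟩

end orbitSetoid

open orbitSetoid

lemma adj_of_quotGraph_adj_of_color_ne {W : Type*} {Y : SimpleGraph W} {ε : W → Fin 2}
    (hε : ∀ a b, Y.Adj a b → ε a ≠ ε b) {β : Equiv.Perm W}
    (haut : ∀ a b, Y.Adj (β a) (β b) ↔ Y.Adj a b) {hinv : ∀ y, β (β y) = y}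
    (hodd : ∀ y, ε (β y) ≠ ε y) {hns : ∀ y, ¬ Y.Adj y (β y)} {u v : W} (hc : ε u ≠ ε v)
    (h : (quotGraph Y β hinv hns).Adj (Quotient.mk _ u) (Quotient.mk _ v)) : Y.Adj u v := by
  obtain ⟨u', v', hu, hv, huv⟩ := h
  wlog hu' : u' = u generalizing u' v'
  · have hβu' : β u' = u := by
      rcases Quotient.exact hu with h | h
      · exact absurd h.symm hu'
      · exact h.symm
    exact this (β u') (β v') ((mk_apply u').trans hu) ((mk_apply v').trans hv)
      ((haut _ _).2 huv) hβu'
  subst hu'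
  have hcv : ε v' = ε v := fin_two_eq_of_ne_of_ne (hε _ _ huv).symm hc.symm
  exact eq_of_mk_eq_of_color_eq hodd hv hcv ▸ huv

def IsEvenLift {V W : Type*} {α : Equiv.Perm V} {hαinv : ∀ x, α (α x) = x}
    {β : Equiv.Perm W} {hβinv : ∀ y, β (β y) = y} (εX : V → Fin 2) (εY : W → Fin 2)
    (f : Quotient (orbitSetoid α hαinv) → Quotient (orbitSetoid β hβinv)) (g : V → W) : Prop :=
  (∀ x, εY (g x) = εX x) ∧
    ∀ x, Quotient.mk (orbitSetoid β hβinv) (g x) = f (Quotient.mk (orbitSetoid α hαinv) x)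

namespace IsEvenLift

variable {U V W : Type*} {γ : Equiv.Perm U} {hγinv : ∀ x, γ (γ x) = x}
  {α : Equiv.Perm V} {hαinv : ∀ x, α (α x) = x} {β : Equiv.Perm W} {hβinv : ∀ y, β (β y) = y}
  {εU : U → Fin 2} {εX : V → Fin 2} {εY : W → Fin 2}

lemma comp {f : Quotient (orbitSetoid γ hγinv) → Quotient (orbitSetoid α hαinv)}
    {f' : Quotient (orbitSetoid α hαinv) → Quotient (orbitSetoid β hβinv)} {g : U → V} {g' : V → W}
    (hg' : IsEvenLift εX εY f' g') (hg : IsEvenLift εU εX f g) :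
    IsEvenLift εU εY (f' ∘ f) (g' ∘ g) :=
  ⟨fun x => (hg'.1 _).trans (hg.1 x), fun x => (hg'.2 _).trans (congrArg f' (hg.2 x))⟩

lemma unique (hodd : ∀ y, εY (β y) ≠ εY y)
    {f : Quotient (orbitSetoid α hαinv) → Quotient (orbitSetoid β hβinv)} {g g' : V → W}
    (hg : IsEvenLift εX εY f g) (hg' : IsEvenLift εX εY f g') : g = g' :=
  funext fun x => eq_of_mk_eq_of_color_eq hodd ((hg.2 x).trans (hg'.2 x).symm)
    ((hg.1 x).trans (hg'.1 x).symm)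

lemma eq_id (hodd : ∀ x, εX (α x) ≠ εX x)
    {f : Quotient (orbitSetoid α hαinv) → Quotient (orbitSetoid α hαinv)} {g : V → V}
    (hg : IsEvenLift εX εX f g) (hf : f = id) : g = id :=
  unique hodd hg (hf ▸ ⟨fun _ => rfl, fun _ => rfl⟩)

lemma exists_of_odd (hodd : ∀ y, εY (β y) ≠ εY y)
    (f : Quotient (orbitSetoid α hαinv) → Quotient (orbitSetoid β hβinv)) :
    ∃ g, IsEvenLift εX εY f g := by
  choose g hmk hcol using fun x => exists_mk_eq_color_eq hodd (f (Quotient.mk _ x)) (εX x)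
  exact ⟨g, hcol, hmk⟩

lemma map_adj {X : SimpleGraph V} {Y : SimpleGraph W} (hεX : ∀ a b, X.Adj a b → εX a ≠ εX b)
    (hεY : ∀ a b, Y.Adj a b → εY a ≠ εY b) (hβaut : ∀ a b, Y.Adj (β a) (β b) ↔ Y.Adj a b)
    (hβodd : ∀ y, εY (β y) ≠ εY y) {hαns : ∀ x, ¬ X.Adj x (α x)}
    {hβns : ∀ y, ¬ Y.Adj y (β y)} (f : quotGraph X α hαinv hαns →g quotGraph Y β hβinv hβns)
    {g : V → W} (hg : IsEvenLift εX εY f g) {a b : V} (hab : X.Adj a b) : Y.Adj (g a) (g b) := by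
  have hq := f.map_adj (show (quotGraph X α hαinv hαns).Adj _ _ from ⟨a, b, rfl, rfl, hab⟩)
  rw [← hg.2 a, ← hg.2 b] at hq
  exact adj_of_quotGraph_adj_of_color_ne hεY hβaut hβodd (by rw [hg.1, hg.1]; exact hεX a b hab) hq

end IsEvenLift

/-- every graph homomorphism `f : X/α → Y/β` between quotients of bigraphs by
odd involutions lifts to a unique even graph homomorphism `f̃ : X → Y` with
`π_Y ∘ f̃ = f ∘ π_X`; moreover if `f` is an isomorphism then so is `f̃`. -/
theorem hom_lifts_from_quot {V W : Type*} (X : SimpleGraph V) (Y : SimpleGraph W)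
    (εX : V → Fin 2) (hεX : ∀ a b, X.Adj a b → εX a ≠ εX b)
    (εY : W → Fin 2) (hεY : ∀ a b, Y.Adj a b → εY a ≠ εY b)
    (α : Equiv.Perm V) (hαaut : ∀ a b, X.Adj (α a) (α b) ↔ X.Adj a b)
    (hαinv : ∀ x, α (α x) = x) (hαodd : ∀ x, εX (α x) ≠ εX x)
    (hαns : ∀ x, ¬ X.Adj x (α x))
    (β : Equiv.Perm W) (hβaut : ∀ a b, Y.Adj (β a) (β b) ↔ Y.Adj a b)
    (hβinv : ∀ y, β (β y) = y) (hβodd : ∀ y, εY (β y) ≠ εY y)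
    (hβns : ∀ y, ¬ Y.Adj y (β y))
    (f : quotGraph X α hαinv hαns →g quotGraph Y β hβinv hβns) :
    (∃! g : X →g Y, (∀ x, εY (g x) = εX x) ∧
        ∀ x, Quotient.mk (orbitSetoid β hβinv) (g x) =
          f (Quotient.mk (orbitSetoid α hαinv) x)) ∧
    ((∃ e : quotGraph X α hαinv hαns ≃g quotGraph Y β hβinv hβns, ∀ a, e a = f a) →
      ∀ g : X →g Y,
        ((∀ x, εY (g x) = εX x) ∧
          ∀ x, Quotient.mk (orbitSetoid β hβinv) (g x) =
            f (Quotient.mk (orbitSetoid α hαinv) x)) →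
        ∃ e' : X ≃g Y, ∀ x, e' x = g x) := by
  obtain ⟨g₀, hg₀⟩ := IsEvenLift.exists_of_odd (εX := εX) hβodd f
  refine ⟨⟨⟨g₀, hg₀.map_adj hεX hεY hβaut hβodd f⟩, hg₀, fun g hg => ?_⟩, ?_⟩
  · exact DFunLike.coe_injective (IsEvenLift.unique hβodd hg hg₀)
  rintro ⟨e, he⟩ g (hg : IsEvenLift εX εY f g)
  obtain ⟨h, hh⟩ := IsEvenLift.exists_of_odd (εX := εY) hαodd e.symm
  have hhg : Function.LeftInverse h g :=
    congrFun ((hh.comp hg).eq_id hαodd (funext fun a => by simp [← he]))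
  have hgh : Function.RightInverse h g :=
    congrFun ((hg.comp hh).eq_id hβodd (funext fun a => by simp [← he]))
  refine ⟨⟨⟨g, h, hhg, hgh⟩, fun {a b} => ⟨fun hab => ?_, g.map_adj⟩⟩,
    fun _ => rfl⟩
  simpa only [hhg a, hhg b] using hh.map_adj hεY hεX hαaut hαodd e.symm.toHom
    (show Y.Adj (g a) (g b) from hab)
end

section
/- Let G be a simple graph such that every automorphism of K_2 × G is of the form c × f for some automorphism c of K_2 and some automorphism f of G, and let α', β' be involutive automorphisms of G. Then τ × α' and τ × β' are evenly conjugate in K_2 × G (i.e. there is an even automorphism h of K_2 × G with h ∘ (τ × α') = (τ × β') ∘ h) if and only if α' and β' are conjugate in Aut(G), i.e. there is an automorphism f of G with f ∘ α' = β' ∘ f. -/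
/-- The automorphism group of a simple graph, as the subgroup of the permutation group of
its vertices consisting of adjacency-preserving permutations. -/
def graphAut {V : Type*} (G : SimpleGraph V) : Subgroup (Equiv.Perm V) where
  carrier := {π | ∀ a b, G.Adj (π a) (π b) ↔ G.Adj a b}
  one_mem' := fun _ _ => Iff.rfl
  mul_mem' := by
    intro π ρ hπ hρ a b
    simpa [Equiv.Perm.mul_apply] using (hπ (ρ a) (ρ b)).trans (hρ a b)
  inv_mem' := by
    intro π hπ a b
    have := (hπ (π⁻¹ a) (π⁻¹ b)).symm
    simpa using this

theorem Equiv.prodCongr_mul_prodCongr {α β : Type*} (c d : Equiv.Perm α) (f g : Equiv.Perm β) :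
    Equiv.prodCongr c f * Equiv.prodCongr d g = Equiv.prodCongr (c * d) (f * g) :=
  rfl

theorem Equiv.prodCongr_right_eq_of_eq {α₁ α₂ β₁ β₂ : Type*} [Nonempty α₁]
    {e₁ e₁' : α₁ ≃ α₂} {e₂ e₂' : β₁ ≃ β₂} (h : Equiv.prodCongr e₁ e₂ = Equiv.prodCongr e₁' e₂') :
    e₂ = e₂' :=
  Equiv.ext fun b => congrArg Prod.snd (Equiv.ext_iff.mp h (Classical.arbitrary α₁, b))

theorem prodCongr_mem_graphAut_kroneckerCover {V : Type*} {G : SimpleGraph V}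
    (c : Equiv.Perm (Fin 2)) {f : Equiv.Perm V} (hf : f ∈ graphAut G) :
    Equiv.prodCongr c f ∈ graphAut (kroneckerCover G) := fun a b =>
  and_congr c.injective.ne_iff (hf a.2 b.2)

theorem tau_prod_evenly_conjugate_iff_general {V : Type*} (G : SimpleGraph V)
    (hsurj : ∀ π ∈ graphAut (kroneckerCover G),
      ∃ (c : Equiv.Perm (Fin 2)) (f : Equiv.Perm V),
        f ∈ graphAut G ∧ π = Equiv.prodCongr c f)
    (α' β' : Equiv.Perm V) :
    (∃ h : Equiv.Perm (Fin 2 × V), h ∈ graphAut (kroneckerCover G) ∧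
        (∀ p : Fin 2 × V, (h p).1 = p.1) ∧
        h * Equiv.prodCongr (Equiv.swap (0 : Fin 2) 1) α' =
          Equiv.prodCongr (Equiv.swap (0 : Fin 2) 1) β' * h) ↔
    (∃ f : Equiv.Perm V, f ∈ graphAut G ∧ f * α' = β' * f) := by
  constructor
  · rintro ⟨h, hmem, -, hcomm⟩
    obtain ⟨c, f, hf, rfl⟩ := hsurj h hmem
    rw [Equiv.prodCongr_mul_prodCongr, Equiv.prodCongr_mul_prodCongr] at hcomm
    exact ⟨f, hf, Equiv.prodCongr_right_eq_of_eq hcomm⟩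
  · rintro ⟨f, hf, hcomm⟩
    refine ⟨Equiv.prodCongr 1 f, prodCongr_mem_graphAut_kroneckerCover 1 hf, fun _ => rfl, ?_⟩
    rw [Equiv.prodCongr_mul_prodCongr, Equiv.prodCongr_mul_prodCongr, hcomm, one_mul, mul_one]

/-- if every automorphism of `K₂ × G` is of the form `c × f`, then for
involutive automorphisms `α'`, `β'` of `G`, the odd involutions `τ × α'` and `τ × β'`
are evenly conjugate in `K₂ × G` iff `α'` and `β'` are conjugate in `Aut(G)`. -/
theorem tau_prod_evenly_conjugate_iff {V : Type*} (G : SimpleGraph V)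
    (hsurj : ∀ π ∈ graphAut (kroneckerCover G),
      ∃ (c : Equiv.Perm (Fin 2)) (f : Equiv.Perm V),
        f ∈ graphAut G ∧ π = Equiv.prodCongr c f)
    (α' β' : Equiv.Perm V) (hα' : α' ∈ graphAut G) (hβ' : β' ∈ graphAut G)
    (hαinv : ∀ v, α' (α' v) = v) (hβinv : ∀ v, β' (β' v) = v) :
    (∃ h : Equiv.Perm (Fin 2 × V), h ∈ graphAut (kroneckerCover G) ∧
        (∀ p : Fin 2 × V, (h p).1 = p.1) ∧
        h * Equiv.prodCongr (Equiv.swap (0 : Fin 2) 1) α' =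
          Equiv.prodCongr (Equiv.swap (0 : Fin 2) 1) β' * h) ↔
    (∃ f : Equiv.Perm V, f ∈ graphAut G ∧ f * α' = β' * f) :=
  tau_prod_evenly_conjugate_iff_general G hsurj α' β'
end

section
/- Let G and H be simple graphs such that the Kronecker covers K_2 × G and K_2 × H are isomorphic. Then the neighborhood complexes N(G) and N(H) are isomorphic; concretely, there is a bijection φ from the set of non-isolated vertices of G to the set of non-isolated vertices of H such that for every nonempty finite set S of vertices of G, the elements of S have a common neighbor in G if and only if the elements of the image set φ(S) have a common neighbor in H. -/
/-!
A set of vertices of `K₂ × G` with a common neighbour lies in one layer `{a} × V`, and each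
layer carries a copy of `N(G)`; but an isomorphism `f : K₂ × G ≃ K₂ × H` need not preserve
layers. Consider the components of the relation "having a common neighbour" on `K₂ × G`. The
layer swap `σ` and its conjugate `π = f⁻¹ τ f` by the layer swap `τ` of `K₂ × H` induce
fixed-point-free involutions on these components. The graph spanned by two such involutions is
bipartite: a closed walk of odd length would give a fixed point of a reflection `(πσ)ᵏσ`, and
every such reflection is conjugate to `σ` or to `π`. A 2-colouring picks one copy `(a v, v)` of
each vertex, with `a` constant on vertices having a common neighbour, such that `f` maps the
picked copies for `G` onto the picked copies for `H`; then `v ↦ (f (a v, v)).2` is the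
required bijection.
-/

open SimpleGraph

section Dihedral

variable {G : Type*} [Group G] {s p : G}

theorem mul_zpow_eq_zpow_neg_mul (hs : s * s = 1) (hp : p * p = 1) (k : ℤ) :
    s * (p * s) ^ k = (p * s) ^ (-k) * s := by
  have : SemiconjBy s (p * s) (p * s)⁻¹ := by
    rw [SemiconjBy, mul_inv_rev, inv_eq_of_mul_eq_one_left hs, inv_eq_of_mul_eq_one_left hp,
      mul_assoc]
  have := this.zpow_right k
  rwa [SemiconjBy, inv_zpow'] at this

-- `(p * s) ^ (2 * j) * s` is `s` conjugated by `(p * s) ^ j`, and `(p * s) ^ (2 * j + 1) * s`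
-- is `p` conjugated by `(p * s) ^ j`.
theorem isConj_or_isConj_zpow_mul (hs : s * s = 1) (hp : p * p = 1) (k : ℤ) :
    IsConj s ((p * s) ^ k * s) ∨ IsConj p ((p * s) ^ k * s) := by
  have hconj := mul_zpow_eq_zpow_neg_mul hs hp
  have hp' : p = p * s * s := by rw [mul_assoc, hs, mul_one]
  generalize p * s = g at hconj hp' ⊢
  obtain ⟨j, rfl | rfl⟩ := Int.even_or_odd' k
  · refine .inl (isConj_iff.2 ⟨g ^ j, ?_⟩)
    rw [mul_assoc, ← zpow_neg, hconj, neg_neg, ← mul_assoc, ← zpow_add, two_mul]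
  · refine .inr (isConj_iff.2 ⟨g ^ j, ?_⟩)
    rw [hp', mul_assoc, mul_assoc, ← zpow_neg, hconj, neg_neg, ← mul_assoc, ← mul_assoc,
      ← zpow_add_one, ← zpow_add]
    ring_nf

end Dihedral

section InvolutionGraph

variable {α : Type*} {S P : Equiv.Perm α}

theorem Equiv.Perm.apply_ne_self_of_isConj (hS : ∀ x, S x ≠ x) (h : IsConj S P) (x : α) :
    P x ≠ x := by
  obtain ⟨c, rfl⟩ := isConj_iff.1 h
  intro hx
  apply hS (c⁻¹ x)
  rwa [Equiv.Perm.mul_apply, Equiv.Perm.mul_apply, ← Equiv.Perm.eq_inv_iff_eq] at hx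

def involutionGraph (S P : Equiv.Perm α) : SimpleGraph α :=
  fromRel fun x y => y = S x ∨ y = P x

theorem involutionGraph.exists_eq_zpow_mul_pow_length_apply (hS : S * S = 1) (hP : P * P = 1)
    {u v : α} (w : (involutionGraph S P).Walk u v) :
    ∃ k : ℤ, u = ((P * S) ^ k * S ^ w.length) v := by
  induction w with
  | nil => exact ⟨0, by simp⟩
  | @cons u v t h w ih =>
    obtain ⟨k, hk⟩ := ih
    rw [Walk.length_cons]
    generalize w.length = n at hk
    have h' : u = S v ∨ u = P v := by
      rcases (fromRel_adj ..).1 h with ⟨-, (rfl | rfl) | (rfl | rfl)⟩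
      · exact .inl (by rw [← Equiv.Perm.mul_apply, hS, Equiv.Perm.one_apply])
      · exact .inr (by rw [← Equiv.Perm.mul_apply, hP, Equiv.Perm.one_apply])
      · exact .inl rfl
      · exact .inr rfl
    rw [hk, ← Equiv.Perm.mul_apply, ← Equiv.Perm.mul_apply] at h'
    rcases h' with rfl | rfl
    · refine ⟨-k, ?_⟩
      rw [← mul_assoc, mul_zpow_eq_zpow_neg_mul hS hP, mul_assoc, ← pow_succ']
    · refine ⟨1 - k, DFunLike.congr_fun ?_ t⟩
      calc P * ((P * S) ^ k * S ^ n) = P * S * (S * (P * S) ^ k) * S ^ n := by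
            rw [← mul_assoc (P * S), mul_assoc P S S, hS, mul_one, mul_assoc]
        _ = (P * S) ^ (1 - k) * S ^ (n + 1) := by
            rw [mul_zpow_eq_zpow_neg_mul hS hP]; group

theorem exists_fin_two_coloring_of_mul_self_eq_one (hS : S * S = 1) (hP : P * P = 1)
    (hS₀ : ∀ x, S x ≠ x) (hP₀ : ∀ x, P x ≠ x) :
    ∃ col : α → Fin 2, ∀ x, col (S x) ≠ col x ∧ col (P x) ≠ col x := by
  have hcol : (involutionGraph S P).Colorable 2 := by
    refine two_colorable_iff_forall_loop_even.2 fun u w => ?_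
    by_contra hodd
    obtain ⟨k, hk⟩ := involutionGraph.exists_eq_zpow_mul_pow_length_apply hS hP w
    obtain ⟨m, hm⟩ := Nat.not_even_iff_odd.1 hodd
    rw [hm, pow_succ, pow_mul, sq, hS, one_pow, one_mul] at hk
    rcases isConj_or_isConj_zpow_mul hS hP k with h | h
    · exact Equiv.Perm.apply_ne_self_of_isConj hS₀ h u hk.symm
    · exact Equiv.Perm.apply_ne_self_of_isConj hP₀ h u hk.symm
  obtain ⟨C⟩ := hcol
  refine ⟨C, fun x => ⟨(C.valid ?_).symm, (C.valid ?_).symm⟩⟩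
  exacts [(fromRel_adj ..).2 ⟨(hS₀ x).symm, .inl (.inl rfl)⟩,
    (fromRel_adj ..).2 ⟨(hP₀ x).symm, .inl (.inr rfl)⟩]

end InvolutionGraph

section Kronecker

variable {V W : Type*} {G : SimpleGraph V} {H : SimpleGraph W}

def SimpleGraph.commonNeighborGraph (G : SimpleGraph V) : SimpleGraph V :=
  fromRel fun v w => (G.commonNeighbors v w).Nonempty

theorem SimpleGraph.Iso.exists_adj_iff (f : G ≃g H) {v : V} :
    (∃ u, H.Adj (f v) u) ↔ ∃ u, G.Adj v u := by
  simp only [f.surjective.exists, f.map_adj_iff]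

theorem SimpleGraph.Iso.commonNeighbors_nonempty_iff (f : G ≃g H) (v w : V) :
    (H.commonNeighbors (f v) (f w)).Nonempty ↔ (G.commonNeighbors v w).Nonempty := by
  simp only [Set.Nonempty, mem_commonNeighbors, f.surjective.exists, f.map_adj_iff]

def SimpleGraph.Iso.commonNeighborGraph (f : G ≃g H) :
    G.commonNeighborGraph ≃g H.commonNeighborGraph where
  toEquiv := f.toEquiv
  map_rel_iff' := by
    simp [SimpleGraph.commonNeighborGraph, f.commonNeighbors_nonempty_iff]

def kroneckerSwap (G : SimpleGraph V) : kroneckerCover G ≃g kroneckerCover G where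
  toEquiv := (Equiv.addRight 1).prodCongr (Equiv.refl V)
  map_rel_iff' := by simp [kroneckerCover]

theorem kroneckerCover_exists_adj_iff {x : Fin 2 × V} :
    (∃ y, (kroneckerCover G).Adj x y) ↔ ∃ u, G.Adj x.2 u :=
  ⟨fun ⟨y, hy⟩ => ⟨y.2, hy.2⟩,
    fun ⟨u, hu⟩ => ⟨(x.1 + 1, u), by dsimp only; omega, hu⟩⟩

theorem commonNeighborGraph_reachable_of_adj {c v w : V} (a : Fin 2) (hv : G.Adj c v)
    (hw : G.Adj c w) : (kroneckerCover G).commonNeighborGraph.Reachable (a, v) (a, w) := by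
  obtain rfl | hvw := eq_or_ne v w
  · rfl
  refine Adj.reachable ((fromRel_adj ..).2 ⟨by simpa using hvw, .inl ⟨(a + 1, c), ?_, ?_⟩⟩)
  exacts [⟨by dsimp only; omega, hv.symm⟩, ⟨by dsimp only; omega, hw.symm⟩]

theorem fst_eq_of_commonNeighborGraph_adj {x y : Fin 2 × V}
    (h : (kroneckerCover G).commonNeighborGraph.Adj x y) : x.1 = y.1 := by
  obtain ⟨-, ⟨z, hxz, hyz⟩ | ⟨z, hyz, hxz⟩⟩ := (fromRel_adj ..).1 h <;>
  · have := hxz.1; have := hyz.1; omega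

theorem fst_eq_of_commonNeighborGraph_reachable {x y : Fin 2 × V}
    (h : (kroneckerCover G).commonNeighborGraph.Reachable x y) : x.1 = y.1 := by
  obtain ⟨w⟩ := h
  induction w with
  | nil => rfl
  | cons hadj _ ih => exact (fst_eq_of_commonNeighborGraph_adj hadj).trans ih

abbrev kroneckerComponent (G : SimpleGraph V) :=
  (kroneckerCover G).commonNeighborGraph.ConnectedComponent

def layerSwap (G : SimpleGraph V) : Equiv.Perm (kroneckerComponent G) :=
  (kroneckerSwap G).commonNeighborGraph.connectedComponentEquiv

theorem layerSwap_mk (x : Fin 2 × V) :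
    layerSwap G (connectedComponentMk _ x) = connectedComponentMk _ (x.1 + 1, x.2) := rfl

theorem layerSwap_mul_self : layerSwap G * layerSwap G = 1 := by
  refine Equiv.ext fun q => q.ind fun x => ?_
  rw [Equiv.Perm.mul_apply, layerSwap_mk, layerSwap_mk]
  congr
  dsimp only
  omega

theorem layerSwap_apply_ne (q : kroneckerComponent G) : layerSwap G q ≠ q := by
  induction q using ConnectedComponent.ind with
  | h x =>
    rw [layerSwap_mk]
    intro h
    have := fst_eq_of_commonNeighborGraph_reachable (ConnectedComponent.exact h)
    dsimp only at this
    omega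

theorem eq_zero_iff_fst_eq {α : Type*} {κ : Fin 2 × α → Fin 2}
    (hκ : ∀ x, κ (x.1 + 1, x.2) ≠ κ x) (x : Fin 2 × α) : κ x = 0 ↔ x.1 = κ (0, x.2) := by
  obtain ⟨a, v⟩ := x
  have h0 := hκ (0, v)
  dsimp only at h0 ⊢
  fin_cases a <;> simp only [Fin.zero_eta, Fin.mk_one, zero_add] at h0 ⊢ <;>
    omega

-- `a` and `b` pick the copies of colour `0`.
theorem exists_compatible_sections (f : kroneckerCover G ≃g kroneckerCover H) :
    ∃ (a : V → Fin 2) (b : W → Fin 2), (∀ c v w, G.Adj c v → G.Adj c w → a v = a w) ∧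
      (∀ c v w, H.Adj c v → H.Adj c w → b v = b w) ∧
      (∀ v, b (f (a v, v)).2 = (f (a v, v)).1) ∧
      ∀ w, a (f.symm (b w, w)).2 = (f.symm (b w, w)).1 := by
  set F := f.commonNeighborGraph.connectedComponentEquiv
  obtain ⟨col, hcol⟩ := exists_fin_two_coloring_of_mul_self_eq_one
    (P := F.symm.permCongr (layerSwap H)) (layerSwap_mul_self (G := G))
    (by rw [← Equiv.permCongr_mul, layerSwap_mul_self]; ext; simp)
    layerSwap_apply_ne fun q => by
      rw [Equiv.permCongr_apply, Equiv.symm_symm, Ne, Equiv.symm_apply_eq]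
      exact layerSwap_apply_ne (F q)
  let κ (x : Fin 2 × V) := col (connectedComponentMk _ x)
  let κ' (y : Fin 2 × W) := col (F.symm (connectedComponentMk _ y))
  have hκ x : κ (x.1 + 1, x.2) ≠ κ x := (hcol (connectedComponentMk _ x)).1
  have hκ' y : κ' (y.1 + 1, y.2) ≠ κ' y := by
    have := (hcol (F.symm (connectedComponentMk _ y))).2
    rwa [Equiv.permCongr_apply, Equiv.symm_symm, Equiv.apply_symm_apply, layerSwap_mk] at this
  have hκf x : κ' (f x) = κ x :=
    congrArg (col ∘ connectedComponentMk _) (f.symm_apply_apply x)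
  have hκf' y : κ (f.symm y) = κ' y := rfl
  refine ⟨fun v => κ (0, v), fun w => κ' (0, w), fun c v w hv hw => ?_, fun c v w hv hw => ?_,
    fun v => ?_, fun w => ?_⟩
  · exact congrArg col (ConnectedComponent.sound (commonNeighborGraph_reachable_of_adj 0 hv hw))
  · exact congrArg (col ∘ F.symm)
      (ConnectedComponent.sound (commonNeighborGraph_reachable_of_adj 0 hv hw))
  · rw [eq_comm, ← eq_zero_iff_fst_eq hκ', hκf]
    exact (eq_zero_iff_fst_eq hκ _).2 rfl
  · rw [eq_comm, ← eq_zero_iff_fst_eq hκ, hκf']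
    exact (eq_zero_iff_fst_eq hκ' _).2 rfl

section Sections

variable (f : kroneckerCover G ≃g kroneckerCover H) {a : V → Fin 2} {b : W → Fin 2}

theorem exists_adj_snd_iff (x : Fin 2 × V) : (∃ u, H.Adj (f x).2 u) ↔ ∃ u, G.Adj x.2 u := by
  rw [← kroneckerCover_exists_adj_iff, f.exists_adj_iff, kroneckerCover_exists_adj_iff]

theorem apply_section_eq (hab : ∀ v, b (f (a v, v)).2 = (f (a v, v)).1) (v : V) :
    f (a v, v) = (b (f (a v, v)).2, (f (a v, v)).2) :=
  Prod.ext (hab v).symm rfl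

def sectionEquiv (hab : ∀ v, b (f (a v, v)).2 = (f (a v, v)).1)
    (hba : ∀ w, a (f.symm (b w, w)).2 = (f.symm (b w, w)).1) : V ≃ W where
  toFun v := (f (a v, v)).2
  invFun w := (f.symm (b w, w)).2
  left_inv v := by simp only [← apply_section_eq f hab, f.symm_apply_apply]
  right_inv w := by simp only [← apply_section_eq f.symm hba, f.apply_symm_apply]

theorem exists_adj_section_of_adj (ha : ∀ c v w, G.Adj c v → G.Adj c w → a v = a w)
    {ι : Type*} [Nonempty ι] (s : ι → V) {c : V} (hc : ∀ i, G.Adj c (s i)) :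
    ∃ c', ∀ i, H.Adj c' (f (a (s i), s i)).2 := by
  obtain ⟨i₀⟩ := ‹Nonempty ι›
  refine ⟨(f (a (s i₀) + 1, c)).2, fun i => (f.map_adj_iff.2 ⟨?_, hc i⟩).2⟩
  rw [ha c (s i) (s i₀) (hc i) (hc i₀)]
  dsimp only
  omega

end Sections

end Kronecker

/-- if `K₂ × G ≅ K₂ × H`, then the neighborhood complexes of `G` and `H`
are isomorphic: there is a bijection `φ` between the non-isolated vertices such that a
nonempty finite set of vertices of `G` has a common neighbor iff its image under `φ`
has a common neighbor in `H`. -/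
theorem neighborhood_complex_iso_of_kroneckerCover_iso {V W : Type*}
    (G : SimpleGraph V) (H : SimpleGraph W)
    (h : Nonempty (kroneckerCover G ≃g kroneckerCover H)) :
    ∃ φ : {v : V // ∃ u, G.Adj v u} ≃ {w : W // ∃ u, H.Adj w u},
      ∀ S : Finset {v : V // ∃ u, G.Adj v u}, S.Nonempty →
        ((∃ c, ∀ v ∈ S, G.Adj c v.1) ↔ (∃ c, ∀ v ∈ S, H.Adj c (φ v).1)) := by
  obtain ⟨f⟩ := h
  obtain ⟨a, b, ha, hb, hab, hba⟩ := exists_compatible_sections f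
  let Φ := sectionEquiv f hab hba
  refine ⟨Φ.subtypeEquiv fun v => (exists_adj_snd_iff f (a v, v)).symm, fun S hS => ?_⟩
  have := hS.coe_sort
  constructor
  · rintro ⟨c, hc⟩
    obtain ⟨c', hc'⟩ := exists_adj_section_of_adj f ha (fun i : S => i.1.1) fun i => hc i i.2
    exact ⟨c', fun v hv => hc' ⟨v, hv⟩⟩
  · rintro ⟨c, hc⟩
    obtain ⟨c', hc'⟩ :=
      exists_adj_section_of_adj f.symm hb (fun i : S => Φ i.1.1) fun i => hc i i.2
    refine ⟨c', fun v hv => ?_⟩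
    have hv' := hc' ⟨v, hv⟩
    rwa [show Φ v.1 = (f (a v.1, v.1)).2 from rfl, ← apply_section_eq f hab,
      f.symm_apply_apply] at hv'
end

section
/- Let X be a bigraph with 2-coloring ε, and let α be an odd involution of X such that no vertex x is adjacent to α(x). Then the map x ↦ (ε(x), π(x)) is a graph isomorphism from X onto the Kronecker cover K_2 × (X/α); in particular, every such bigraph is isomorphic to the Kronecker cover of its quotient X/α. -/
theorem Fin.two_eq_of_ne_of_ne {a b c : Fin 2} (hab : a ≠ b) (hcb : c ≠ b) : a = c := by
  omega

section OddInvolution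

variable {V : Type*} {α : Equiv.Perm V} (hinv : ∀ x, α (α x) = x)

theorem orbitSetoid_mk_eq_mk_iff {x y : V} :
    Quotient.mk (orbitSetoid α hinv) x = Quotient.mk _ y ↔ y = x ∨ y = α x :=
  Quotient.eq

theorem orbitSetoid_mk_apply (x : V) :
    Quotient.mk (orbitSetoid α hinv) (α x) = Quotient.mk _ x :=
  Quotient.sound (Or.inr (hinv x).symm)

/-- Each orbit `{x, α x}` has exactly one vertex of each colour. -/
theorem bijective_color_orbit {ε : V → Fin 2} (hodd : ∀ x, ε (α x) ≠ ε x) :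
    Function.Bijective fun x => (ε x, Quotient.mk (orbitSetoid α hinv) x) := by
  constructor
  · intro x y hxy
    obtain ⟨hcolor, horbit⟩ := Prod.ext_iff.mp hxy
    rcases (orbitSetoid_mk_eq_mk_iff hinv).mp horbit with rfl | rfl
    · rfl
    · exact absurd hcolor.symm (hodd x)
  · rintro ⟨c, q⟩
    obtain ⟨x, rfl⟩ := Quotient.exists_rep q
    by_cases hx : ε x = c
    · exact ⟨x, Prod.ext hx rfl⟩
    · exact ⟨α x, Prod.ext (Fin.two_eq_of_ne_of_ne (hodd x) (Ne.symm hx))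
        (orbitSetoid_mk_apply hinv x)⟩

variable {X : SimpleGraph V} (hns : ∀ x, ¬ X.Adj x (α x))
  (haut : ∀ a b, X.Adj (α a) (α b) ↔ X.Adj a b)
include haut

theorem quotGraph_adj_mk_iff {x y : V} :
    (quotGraph X α hinv hns).Adj (Quotient.mk _ x) (Quotient.mk _ y) ↔
      X.Adj x y ∨ X.Adj x (α y) := by
  constructor
  · rintro ⟨x', y', hx', hy', hadj⟩
    rcases (orbitSetoid_mk_eq_mk_iff hinv).mp hx'.symm with hx' | hx' <;>
      rcases (orbitSetoid_mk_eq_mk_iff hinv).mp hy'.symm with hy' | hy' <;> subst x' y'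
    · exact .inl hadj
    · exact .inr hadj
    · rw [← hinv y] at hadj
      exact .inr ((haut _ _).mp hadj)
    · exact .inl ((haut _ _).mp hadj)
  · rintro (hadj | hadj)
    · exact ⟨x, y, rfl, rfl, hadj⟩
    · exact ⟨x, α y, rfl, orbitSetoid_mk_apply hinv y, hadj⟩

/-- An edge from `x` to `α y` joins `x` to a vertex of the colour of `y`, so in the
Kronecker cover only the edges of `X` itself survive. -/
theorem kroneckerCover_quotGraph_adj_iff {ε : V → Fin 2} (hε : ∀ a b, X.Adj a b → ε a ≠ ε b)
    (hodd : ∀ x, ε (α x) ≠ ε x) {x y : V} :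
    (kroneckerCover (quotGraph X α hinv hns)).Adj
        (ε x, Quotient.mk _ x) (ε y, Quotient.mk _ y) ↔ X.Adj x y := by
  change ε x ≠ ε y ∧ _ ↔ _
  rw [quotGraph_adj_mk_iff hinv hns haut]
  constructor
  · rintro ⟨hcolor, hadj | hadj⟩
    · exact hadj
    · exact absurd (Fin.two_eq_of_ne_of_ne (hε _ _ hadj) (hodd y).symm) hcolor
  · intro hadj
    exact ⟨hε _ _ hadj, .inl hadj⟩

end OddInvolution

/-- a bigraph `X` with an odd involution `α` (with simple quotient) is
isomorphic to the Kronecker cover of `X/α` via `x ↦ (ε x, π x)`. -/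
theorem bigraph_iso_kroneckerCover_quot {V : Type*} (X : SimpleGraph V) (ε : V → Fin 2)
    (hε : ∀ a b, X.Adj a b → ε a ≠ ε b)
    (α : Equiv.Perm V) (hαaut : ∀ a b, X.Adj (α a) (α b) ↔ X.Adj a b)
    (hαinv : ∀ x, α (α x) = x) (hαodd : ∀ x, ε (α x) ≠ ε x)
    (hαns : ∀ x, ¬ X.Adj x (α x)) :
    ∃ e : X ≃g kroneckerCover (quotGraph X α hαinv hαns),
      ∀ x, e x = (ε x, Quotient.mk (orbitSetoid α hαinv) x) :=
  ⟨⟨Equiv.ofBijective _ (bijective_color_orbit hαinv hαodd),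
      kroneckerCover_quotGraph_adj_iff hαinv hαns hαaut hε hαodd⟩, fun _ => rfl⟩
end

section
/- Let n be an integer greater than 2, and consider the Kronecker cover K_2 × K_n of the complete graph K_n, with the 2-coloring ε(a,v) = a. If α is an odd involution of K_2 × K_n such that no vertex x is adjacent to α(x), then α(a,v) = (1−a, v) for every vertex (a,v). In other words, there is exactly one odd involution of K_2 × K_n whose quotient is a simple graph, and its quotient is K_n. -/
theorem Fin.eq_one_sub_of_ne {a b : Fin 2} (h : a ≠ b) : a = 1 - b := by
  revert a b
  decide

theorem kroneckerCover_top_eq_of_fst_ne_of_not_adj {V : Type*} {x y : Fin 2 × V}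
    (hne : x.1 ≠ y.1) (hnadj : ¬ (kroneckerCover (⊤ : SimpleGraph V)).Adj x y) :
    y = (1 - x.1, x.2) := by
  have hsnd : y.2 = x.2 := by
    by_contra hsnd
    exact hnadj ⟨hne, Ne.symm hsnd⟩
  exact Prod.ext (Fin.eq_one_sub_of_ne hne.symm) hsnd

theorem odd_involution_kroneckerCover_complete_general (n : ℕ)
    (α : Equiv.Perm (Fin 2 × Fin n))
    (hαodd : ∀ p : Fin 2 × Fin n, (α p).1 ≠ p.1)
    (hαns : ∀ p, ¬ (kroneckerCover (⊤ : SimpleGraph (Fin n))).Adj p (α p)) :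
    ∀ p : Fin 2 × Fin n, α p = (1 - p.1, p.2) :=
  fun p => kroneckerCover_top_eq_of_fst_ne_of_not_adj (hαodd p).symm (hαns p)

/-- for `n > 2`, the only odd involution `α` of `K₂ × K_n` such that no
vertex is adjacent to its image is `α (a, v) = (1 - a, v)`. -/
theorem odd_involution_kroneckerCover_complete (n : ℕ) (hn : 2 < n)
    (α : Equiv.Perm (Fin 2 × Fin n))
    (hα : α ∈ graphAut (kroneckerCover (⊤ : SimpleGraph (Fin n))))
    (hαinv : ∀ p, α (α p) = p) (hαodd : ∀ p : Fin 2 × Fin n, (α p).1 ≠ p.1)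
    (hαns : ∀ p, ¬ (kroneckerCover (⊤ : SimpleGraph (Fin n))).Adj p (α p)) :
    ∀ p : Fin 2 × Fin n, α p = (1 - p.1, p.2) :=
  odd_involution_kroneckerCover_complete_general n α hαodd hαns
end
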